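/- arXiv:2310.14977 — 6 statements merged into one kernel-verified Lean document; each statement's English description precedes it below -/
import Mathlib

section
/- Let F be a finite field, n a natural number, x : Fin n → F a fixed vector, and q ∈ [0,1] a real number. On a probability space, let (H_v)_{v ∈ Fin n} and (G_v)_{v ∈ Fin n} be 2n random variables, all mutually independent as one family, such that for each v: H_v takes values in {0,1} ⊆ F (where 0 and 1 are the additive and multiplicative identities of F) with ℙ(H_v = 0) = q, and G_v is uniformly distributed on F. Set S = Σ_{v} x_v · H_v · G_v (computed in F) and let d = |{v : x_v ≠ 0}|. Then ℙ(S ≠ 0) = (1 − q^d) · (1 − 1/|F|). -/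
open MeasureTheory ProbabilityTheory
open scoped ENNReal

/-!
Each summand `x v * H v * G v` is `0` with probability `q` (or surely, when `x v = 0`) and
uniform on `F` otherwise: its law is `q δ₀ + (1 - q) U`, with `U` the uniform law. This family
of laws is closed under convolution, `(p δ₀ + (1 - p) U) ∗ (p' δ₀ + (1 - p') U) = p p' δ₀ + (1 - p p') U`, because `U`
absorbs every probability measure. Hence `S` has law `q^d δ₀ + (1 - q^d) U`, which gives
`ℙ(S ≠ 0) = (1 - q^d)(1 - 1/|F|)`.
-/

namespace MeasureTheory.Measure

variable {G : Type*} [MeasurableSpace G]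

lemma uniformOn_univ_singleton [Fintype G] [MeasurableSingletonClass G] (a : G) :
    uniformOn (Set.univ : Set G) {a} = (Fintype.card G : ℝ≥0∞)⁻¹ := by
  rw [uniformOn_univ, count_singleton, one_div]

variable [AddGroup G]

lemma conv_uniformOn_univ [Fintype G] [MeasurableSingletonClass G] (ν : Measure G) :
    ν ∗ uniformOn Set.univ = ν Set.univ • uniformOn Set.univ := by
  refine ext_iff_singleton.2 fun b => ?_
  have htranslate (a : G) :
      Prod.mk a ⁻¹' ((fun p : G × G => p.1 + p.2) ⁻¹' {b}) = {-a + b} := by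
    ext; simp [eq_neg_add_iff_add_eq]
  rw [conv, map_apply (by fun_prop) (measurableSet_singleton b),
    prod_apply (measurableSet_singleton _ |>.preimage (by fun_prop))]
  simp only [htranslate, uniformOn_univ_singleton, lintegral_const, Measure.smul_apply,
    smul_eq_mul, mul_comm]

noncomputable def zeroOrUniform (p : ℝ) : Measure G :=
  ENNReal.ofReal p • dirac 0 + ENNReal.ofReal (1 - p) • uniformOn Set.univ

lemma zeroOrUniform_one : (zeroOrUniform 1 : Measure G) = dirac 0 := by
  simp [zeroOrUniform]

lemma zeroOrUniform_univ [Fintype G] {p : ℝ} (hp : p ∈ Set.Icc (0 : ℝ) 1) :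
    (zeroOrUniform p : Measure G) Set.univ = 1 := by
  have : Nonempty G := ⟨0⟩
  rw [zeroOrUniform, add_apply, Measure.smul_apply, Measure.smul_apply, measure_univ,
    measure_univ, smul_eq_mul, smul_eq_mul, mul_one, mul_one,
    ← ENNReal.ofReal_add hp.1 (by linarith [hp.2]), add_sub_cancel, ENNReal.ofReal_one]

lemma isProbabilityMeasure_zeroOrUniform [Fintype G] {p : ℝ} (hp : p ∈ Set.Icc (0 : ℝ) 1) :
    IsProbabilityMeasure (zeroOrUniform p : Measure G) :=
  ⟨zeroOrUniform_univ hp⟩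

lemma zeroOrUniform_conv [Fintype G] [MeasurableSingletonClass G] {p p' : ℝ}
    (hp : p ∈ Set.Icc (0 : ℝ) 1) (hp' : p' ∈ Set.Icc (0 : ℝ) 1) :
    (zeroOrUniform p : Measure G) ∗ zeroOrUniform p' = zeroOrUniform (p * p') := by
  have hcoeff : ENNReal.ofReal p' * ENNReal.ofReal (1 - p) + ENNReal.ofReal (1 - p')
      = ENNReal.ofReal (1 - p * p') := by
    rw [← ENNReal.ofReal_mul hp'.1, ← ENNReal.ofReal_add (by nlinarith [hp.2, hp'.1])
      (by linarith [hp'.2])]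
    ring_nf
  calc (zeroOrUniform p : Measure G) ∗ zeroOrUniform p'
      = ENNReal.ofReal p' • zeroOrUniform p + ENNReal.ofReal (1 - p') • uniformOn Set.univ := by
        rw [zeroOrUniform.eq_1 p', conv_add, conv_smul_right, conv_smul_right,
          conv_dirac_zero, conv_uniformOn_univ, zeroOrUniform_univ hp, one_smul]
    _ = zeroOrUniform (p * p') := by
        rw [zeroOrUniform, zeroOrUniform, smul_add, smul_smul, smul_smul, add_assoc, ← add_smul,
          hcoeff, ← ENNReal.ofReal_mul hp'.1, mul_comm p']

lemma zeroOrUniform_compl_zero [Fintype G] [MeasurableSingletonClass G] {p : ℝ}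
    (hp : p ∈ Set.Icc (0 : ℝ) 1) :
    (zeroOrUniform p : Measure G) {0}ᶜ
      = ENNReal.ofReal ((1 - p) * (1 - 1 / (Fintype.card G : ℝ))) := by
  have : Nonempty G := ⟨0⟩
  have hcard : (0 : ℝ) < Fintype.card G := by exact_mod_cast Fintype.card_pos
  have hU : uniformOn (Set.univ : Set G) {0}ᶜ = ENNReal.ofReal (1 - 1 / (Fintype.card G : ℝ)) := by
    rw [prob_compl_eq_one_sub (measurableSet_singleton 0), uniformOn_univ_singleton,
      ENNReal.ofReal_sub _ (by positivity), ENNReal.ofReal_one, one_div,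
      ENNReal.ofReal_inv_of_pos hcard, ENNReal.ofReal_natCast]
  have hδ : dirac (0 : G) {0}ᶜ = 0 := by simp
  rw [zeroOrUniform, add_apply, Measure.smul_apply, Measure.smul_apply, hδ, hU, smul_zero,
    zero_add, smul_eq_mul, ENNReal.ofReal_mul (by linarith [hp.2])]

end MeasureTheory.Measure

open MeasureTheory.Measure

section RandomVariables

variable {Ω : Type*} [MeasurableSpace Ω] {μ : Measure Ω}

lemma hasLaw_zero_zeroOrUniform_one {G : Type*} [AddGroup G] [MeasurableSpace G]
    [IsProbabilityMeasure μ] :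
    HasLaw (fun _ : Ω => (0 : G)) (zeroOrUniform 1) μ where
  map_eq := by rw [Measure.map_const, measure_univ, one_smul, zeroOrUniform_one]

lemma hasLaw_mul_bernoulli_mul_uniform {F : Type*} [Field F] [Fintype F] [MeasurableSpace F]
    [MeasurableSingletonClass F] [IsProbabilityMeasure μ]
    {H G : Ω → F} (hH : Measurable H) (hG : Measurable G) (hHG : IndepFun H G μ)
    (hH01 : ∀ ω, H ω = 0 ∨ H ω = 1) {q : ℝ} (hq : 0 ≤ q)
    (hHq : μ {ω | H ω = 0} = ENNReal.ofReal q)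
    (hGunif : ∀ b, μ {ω | G ω = b} = (Fintype.card F : ℝ≥0∞)⁻¹) {x : F} (hx : x ≠ 0) :
    HasLaw (fun ω => x * H ω * G ω) (zeroOrUniform q) μ where
  map_eq := by
    classical
    refine ext_iff_singleton.2 fun b => ?_
    have hH0 : MeasurableSet {ω | H ω = 0} := hH (measurableSet_singleton 0)
    have hzero : {ω | x * H ω * G ω = b} ∩ {ω | H ω = 0}
        = if b = 0 then {ω | H ω = 0} else ∅ := by
      ext ω; split_ifs with hb <;> aesop
    have hone : {ω | x * H ω * G ω = b} \ {ω | H ω = 0}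
        = H ⁻¹' {0}ᶜ ∩ G ⁻¹' {x⁻¹ * b} := by
      ext ω
      rcases hH01 ω with h | h <;> simp [h, eq_inv_mul_iff_mul_eq₀ hx]
    have hG' : μ (G ⁻¹' {x⁻¹ * b}) = (Fintype.card F : ℝ≥0∞)⁻¹ := hGunif _
    have hH' : μ (H ⁻¹' {0}ᶜ) = ENNReal.ofReal (1 - q) := by
      rw [Set.preimage_compl, prob_compl_eq_one_sub (hH (measurableSet_singleton 0)),
        ENNReal.ofReal_sub _ hq, ENNReal.ofReal_one]
      exact congrArg (1 - ·) hHq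
    rw [map_apply (by fun_prop) (measurableSet_singleton b), Set.preimage,
      ← measure_inter_add_sdiff _ hH0]
    simp only [Set.mem_singleton_iff]
    rw [hzero, hone, hHG.measure_inter_preimage_eq_mul _ _ (measurableSet_singleton _).compl
      (measurableSet_singleton _), hG', hH', zeroOrUniform, add_apply, Measure.smul_apply,
      Measure.smul_apply, uniformOn_univ_singleton, smul_eq_mul, smul_eq_mul]
    split_ifs with hb
    · simp [hb, hHq]
    · simp [Ne.symm hb]

lemma hasLaw_sum_zeroOrUniform {ι G : Type*} [Fintype G] [AddCommGroup G] [MeasurableSpace G]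
    [MeasurableSingletonClass G] [IsProbabilityMeasure μ] {Z : ι → Ω → G} {p : ι → ℝ}
    (hp : ∀ i, p i ∈ Set.Icc (0 : ℝ) 1) (hZ : ∀ i, HasLaw (Z i) (zeroOrUniform (p i)) μ)
    (hindep : ∀ a (A : Finset ι), a ∉ A → IndepFun (Z a) (fun ω => ∑ i ∈ A, Z i ω) μ)
    (A : Finset ι) :
    HasLaw (fun ω => ∑ i ∈ A, Z i ω) (zeroOrUniform (∏ i ∈ A, p i)) μ := by
  classical
  induction A using Finset.induction_on with
  | empty => simpa using hasLaw_zero_zeroOrUniform_one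
  | insert a A ha ih =>
    have hpA : ∏ i ∈ A, p i ∈ Set.Icc (0 : ℝ) 1 :=
      ⟨Finset.prod_nonneg fun i _ => (hp i).1, Finset.prod_le_one (fun i _ => (hp i).1)
        fun i _ => (hp i).2⟩
    have := isProbabilityMeasure_zeroOrUniform (G := G) (hp a)
    have := isProbabilityMeasure_zeroOrUniform (G := G) hpA
    simp only [Finset.sum_insert ha, Finset.prod_insert ha]
    rw [← zeroOrUniform_conv (hp a) hpA]
    exact (hindep a A ha).hasLaw_fun_add (hZ a) ih

lemma indepFun_sum_of_notMem {ι β γ : Type*} [MeasurableSpace β] [Finite β]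
    [MeasurableSingletonClass β] [AddCommMonoid γ] [MeasurableSpace γ]
    {H G : ι → Ω → β} (hH : ∀ i, Measurable (H i)) (hG : ∀ i, Measurable (G i))
    (hindep : iIndepFun (Sum.elim H G) μ) (φ : ι → β → β → γ)
    {a : ι} {A : Finset ι} (ha : a ∉ A) :
    IndepFun (fun ω => φ a (H a ω) (G a ω)) (fun ω => ∑ i ∈ A, φ i (H i ω) (G i ω)) μ := by
  have hdisj : Disjoint (({a} : Finset ι).disjSum {a}) (A.disjSum A) := by
    simp [Finset.disjoint_left, ha]
  have hblocks := hindep.indepFun_finset _ _ hdisj (Sum.forall.2 ⟨hH, hG⟩)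
  convert hblocks.comp
    (φ := fun t => φ a (t ⟨.inl a, by simp⟩) (t ⟨.inr a, by simp⟩))
    (ψ := fun t => ∑ i ∈ A.attach, φ i (t ⟨.inl i, by simp⟩) (t ⟨.inr i, by simp⟩))
    (measurable_of_finite _) (measurable_of_finite _) using 1
  · rfl
  · funext ω
    exact (Finset.sum_attach A fun i => φ i (H i ω) (G i ω)).symm

end RandomVariables

/-- Single-entry characterization of the F-PCSA memory state: with
`S = ∑ v, x v * H v * G v`, where the `H v` are `{0,1}`-valued with
`ℙ(H v = 0) = q`, the `G v` are uniform on the finite field `F`, and all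
`2n` variables are mutually independent, one has
`ℙ(S ≠ 0) = (1 − q^d) (1 − |F|⁻¹)` where `d = |{v : x v ≠ 0}|`. -/
theorem stmt_3 (F : Type*) [Field F] [Fintype F] [DecidableEq F]
    [MeasurableSpace F] [MeasurableSingletonClass F]
    (n : ℕ) (x : Fin n → F) (q : ℝ) (hq0 : 0 ≤ q) (hq1 : q ≤ 1)
    (Ω : Type*) [MeasurableSpace Ω] (μ : Measure Ω) [IsProbabilityMeasure μ]
    (H G : Fin n → Ω → F)
    (hmeasH : ∀ v, Measurable (H v)) (hmeasG : ∀ v, Measurable (G v))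
    (hindep : iIndepFun (β := fun _ : Fin n ⊕ Fin n => F)
      (Sum.elim H G) μ)
    (hH01 : ∀ v ω, H v ω = 0 ∨ H v ω = 1)
    (hHq : ∀ v, μ {ω | H v ω = 0} = ENNReal.ofReal q)
    (hGunif : ∀ v b, μ {ω | G v ω = b} = (Fintype.card F : ℝ≥0∞)⁻¹) :
    μ {ω | (∑ v, x v * H v ω * G v ω) ≠ 0}
      = ENNReal.ofReal
          ((1 - q ^ (Finset.univ.filter (fun v => x v ≠ 0)).card)
            * (1 - 1 / (Fintype.card F : ℝ))) := by
  set p : Fin n → ℝ := fun v => if x v = 0 then 1 else q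
  have hp (v : Fin n) : p v ∈ Set.Icc (0 : ℝ) 1 := by
    by_cases hxv : x v = 0 <;> simp [p, hxv, hq0, hq1]
  have hterm (v : Fin n) : HasLaw (fun ω => x v * H v ω * G v ω) (zeroOrUniform (p v)) μ := by
    by_cases hxv : x v = 0
    · simpa [p, hxv] using hasLaw_zero_zeroOrUniform_one
    · simpa [p, hxv] using hasLaw_mul_bernoulli_mul_uniform (hmeasH v) (hmeasG v)
        (hindep.indepFun Sum.inl_ne_inr) (hH01 v) hq0 (hHq v) (hGunif v) hxv
  have hS := hasLaw_sum_zeroOrUniform hp hterm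
    (fun _ _ ha => indepFun_sum_of_notMem hmeasH hmeasG hindep (fun v h g => x v * h * g) ha)
    Finset.univ
  have hprod : ∏ v, p v = q ^ (Finset.univ.filter (fun v => x v ≠ 0)).card := by
    simp [p, Finset.prod_ite]
  rw [hS.measure_eq (p := (· ≠ 0)) (measurableSet_singleton 0).compl, hprod]
  exact zeroOrUniform_compl_zero ⟨pow_nonneg hq0 _, pow_le_one₀ hq0 hq1⟩
end

section
/- For every r with 0 < r ≤ 1, the function z ↦ ν(z, r) is a probability density on ℝ, i.e., ∫_{ℝ} ν(z, r) dz = 1. -/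
open MeasureTheory

/-- The density `ν(z, r)` of the highest position of an F-PCSA subsketch:
`ν(z, r) = (1 − e^{−2^{−z}}) r ∏_{j=1}^∞ (1 − (1 − e^{−2^{−z−j}}) r)`. -/
noncomputable def nu (z r : ℝ) : ℝ :=
  (1 - Real.exp (-(2:ℝ) ^ (-z))) * r *
    ∏' j : ℕ, (1 - (1 - Real.exp (-(2:ℝ) ^ (-z - ((j : ℝ) + 1)))) * r)

/-!
Write `F(z) = ∏_{j ≥ 0} (1 - (1 - e^{-2^{-(z+j)}}) r)`. Splitting off the first factor gives
`F(z) = (1 - (1 - e^{-2^{-z}}) r) F(z + 1)`, i.e. `ν(z, r) = F(z + 1) - F(z)`. The function `F` is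
nondecreasing, tends to `1` at `+∞` because `-log F(z) ≤ 2^{1-z}`, and tends to `0` at `-∞` because
its limit `L` there satisfies `L = (1 - r) L`. For any nondecreasing `F` with limits `a` at `-∞` and
`b` at `+∞`, `∫ (F(x + h) - F(x)) dx = h (b - a)`: the integral over `[-c, c]` telescopes to
`∫_c^{c+h} F - ∫_{-c}^{-c+h} F`.
-/

open Real Filter Set Topology

namespace Monotone

variable {F : ℝ → ℝ} {a b h : ℝ}

lemma tendsto_intervalIntegral_add {l : Filter ℝ} (hF : Monotone F) (hh : 0 ≤ h)
    (hl : Tendsto (· + h) l l) (hFl : Tendsto F l (𝓝 b)) :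
    Tendsto (fun c => ∫ x in c..c + h, F x) l (𝓝 (h * b)) := by
  have hc : ∀ c, c ≤ c + h := fun c => le_add_of_nonneg_right hh
  have lower : ∀ c, h * F c ≤ ∫ x in c..c + h, F x := fun c => by
    simpa using intervalIntegral.integral_mono_on (μ := volume) (hc c) intervalIntegrable_const
      hF.intervalIntegrable fun x hx => hF hx.1
  have upper : ∀ c, ∫ x in c..c + h, F x ≤ h * F (c + h) := fun c => by
    simpa using intervalIntegral.integral_mono_on (μ := volume) (hc c) hF.intervalIntegrable
      intervalIntegrable_const fun x hx => hF hx.2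
  exact tendsto_of_tendsto_of_tendsto_of_le_of_le (hFl.const_mul h)
    ((hFl.comp hl).const_mul h) lower upper

lemma intervalIntegral_sub_comp_add (hF : Monotone F) (c d : ℝ) :
    ∫ x in c..d, (F (x + h) - F x) = (∫ x in d..d + h, F x) - ∫ x in c..c + h, F x := by
  have hFh : Monotone fun x => F (x + h) := hF.comp fun _ _ hxy => by simpa using hxy
  rw [intervalIntegral.integral_sub hFh.intervalIntegrable hF.intervalIntegrable,
    intervalIntegral.integral_comp_add_right,
    intervalIntegral.integral_interval_sub_interval_comm' hF.intervalIntegrable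
      hF.intervalIntegrable hF.intervalIntegrable]

lemma tendsto_intervalIntegral_sub_comp_add (hF : Monotone F) (hh : 0 ≤ h)
    (ha : Tendsto F atBot (𝓝 a)) (hb : Tendsto F atTop (𝓝 b)) :
    Tendsto (fun c => ∫ x in -c..c, (F (x + h) - F x)) atTop (𝓝 (h * (b - a))) := by
  simp_rw [hF.intervalIntegral_sub_comp_add, mul_sub]
  exact (hF.tendsto_intervalIntegral_add hh (tendsto_atTop_add_const_right _ h tendsto_id) hb).sub
    ((hF.tendsto_intervalIntegral_add hh (tendsto_atBot_add_const_right _ h tendsto_id) ha).comp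
      tendsto_neg_atTop_atBot)

lemma integrable_sub_comp_add (hF : Monotone F) (hh : 0 ≤ h)
    (ha : Tendsto F atBot (𝓝 a)) (hb : Tendsto F atTop (𝓝 b)) :
    Integrable fun x => F (x + h) - F x := by
  have hFh : Monotone fun x => F (x + h) := hF.comp fun _ _ hxy => by simpa using hxy
  have hnorm : ∀ x, ‖F (x + h) - F x‖ = F (x + h) - F x := fun x =>
    Real.norm_of_nonneg (sub_nonneg.2 (hF (le_add_of_nonneg_right hh)))
  refine integrable_of_intervalIntegral_norm_tendsto (h * (b - a))
    (fun c => (hFh.intervalIntegrable.sub hF.intervalIntegrable).1) tendsto_neg_atTop_atBot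
    tendsto_id ?_
  simp_rw [hnorm]
  exact hF.tendsto_intervalIntegral_sub_comp_add hh ha hb

theorem integral_sub_comp_add (hF : Monotone F) (hh : 0 ≤ h)
    (ha : Tendsto F atBot (𝓝 a)) (hb : Tendsto F atTop (𝓝 b)) :
    ∫ x, (F (x + h) - F x) = h * (b - a) :=
  tendsto_nhds_unique
    (intervalIntegral_tendsto_integral (hF.integrable_sub_comp_add hh ha hb)
      tendsto_neg_atTop_atBot tendsto_id)
    (hF.tendsto_intervalIntegral_sub_comp_add hh ha hb)

end Monotone

noncomputable def nuFactor (r z : ℝ) : ℝ := 1 - (1 - exp (-(2:ℝ) ^ (-z))) * r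

noncomputable def nuCdf (r z : ℝ) : ℝ := ∏' j : ℕ, nuFactor r (z + j)

section

variable {r : ℝ}

lemma exp_neg_two_rpow_le_one (z : ℝ) : exp (-(2:ℝ) ^ (-z)) ≤ 1 :=
  exp_le_one_iff.2 (neg_nonpos.2 (rpow_nonneg zero_le_two _))

lemma exp_neg_two_rpow_le_nuFactor (hr1 : r ≤ 1) (z : ℝ) :
    exp (-(2:ℝ) ^ (-z)) ≤ nuFactor r z := by
  have := exp_neg_two_rpow_le_one z
  unfold nuFactor; nlinarith

lemma nuFactor_pos (hr1 : r ≤ 1) (z : ℝ) : 0 < nuFactor r z :=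
  (exp_pos _).trans_le (exp_neg_two_rpow_le_nuFactor hr1 z)

lemma nuFactor_le_one (hr0 : 0 ≤ r) (z : ℝ) : nuFactor r z ≤ 1 := by
  have := exp_neg_two_rpow_le_one z
  unfold nuFactor; nlinarith

lemma neg_log_nuFactor_le (hr1 : r ≤ 1) (z : ℝ) : -log (nuFactor r z) ≤ (2:ℝ) ^ (-z) := by
  have := log_le_log (exp_pos _) (exp_neg_two_rpow_le_nuFactor hr1 z)
  rw [log_exp] at this
  linarith

lemma monotone_nuFactor (hr0 : 0 ≤ r) : Monotone (nuFactor r) := fun z w hzw => by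
  have : (2:ℝ) ^ (-w) ≤ (2:ℝ) ^ (-z) := rpow_le_rpow_of_exponent_le one_le_two (neg_le_neg hzw)
  unfold nuFactor
  gcongr

lemma tendsto_nuFactor_atBot (r : ℝ) : Tendsto (nuFactor r) atBot (𝓝 (1 - r)) := by
  have h2 : Tendsto (fun z : ℝ => (2:ℝ) ^ (-z)) atBot atTop :=
    (tendsto_rpow_atTop_of_base_gt_one 2 one_lt_two).comp tendsto_neg_atBot_atTop
  show Tendsto (fun z => 1 - (1 - exp (-(2:ℝ) ^ (-z))) * r) atBot _
  simpa using (((tendsto_exp_neg_atTop_nhds_zero.comp h2).const_sub 1).mul_const r).const_sub 1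

lemma two_rpow_neg_add_natCast (z : ℝ) (j : ℕ) :
    (2:ℝ) ^ (-(z + j)) = (2:ℝ) ^ (-z) * (1 / 2) ^ j := by
  rw [neg_add, rpow_add two_pos, rpow_neg zero_le_two (j:ℝ), rpow_natCast, one_div, inv_pow]

lemma neg_log_nuFactor_add_natCast_le (hr1 : r ≤ 1) (z : ℝ) (j : ℕ) :
    -log (nuFactor r (z + j)) ≤ (2:ℝ) ^ (-z) * (1 / 2) ^ j :=
  two_rpow_neg_add_natCast z j ▸ neg_log_nuFactor_le hr1 _

lemma summable_log_nuFactor (hr0 : 0 ≤ r) (hr1 : r ≤ 1) (z : ℝ) :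
    Summable fun j : ℕ => log (nuFactor r (z + j)) :=
  (summable_geometric_two.mul_left _).of_norm_bounded fun j => by
    rw [norm_of_nonpos (log_nonpos (nuFactor_pos hr1 _).le (nuFactor_le_one hr0 _))]
    exact neg_log_nuFactor_add_natCast_le hr1 z j

lemma nuCdf_eq_exp_tsum (hr0 : 0 ≤ r) (hr1 : r ≤ 1) (z : ℝ) :
    nuCdf r z = exp (∑' j : ℕ, log (nuFactor r (z + j))) :=
  (rexp_tsum_eq_tprod (fun _ => nuFactor_pos hr1 _) (summable_log_nuFactor hr0 hr1 z)).symm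

lemma nuCdf_nonneg (hr0 : 0 ≤ r) (hr1 : r ≤ 1) (z : ℝ) : 0 ≤ nuCdf r z :=
  nuCdf_eq_exp_tsum hr0 hr1 z ▸ (exp_pos _).le

lemma monotone_nuCdf (hr0 : 0 ≤ r) (hr1 : r ≤ 1) : Monotone (nuCdf r) := fun z w hzw => by
  rw [nuCdf_eq_exp_tsum hr0 hr1, nuCdf_eq_exp_tsum hr0 hr1, exp_le_exp]
  refine (summable_log_nuFactor hr0 hr1 z).tsum_le_tsum (fun j => ?_)
    (summable_log_nuFactor hr0 hr1 w)
  exact log_le_log (nuFactor_pos hr1 _) (monotone_nuFactor hr0 (by linarith))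

lemma exp_neg_two_mul_le_nuCdf (hr0 : 0 ≤ r) (hr1 : r ≤ 1) (z : ℝ) :
    exp (-(2 * (2:ℝ) ^ (-z))) ≤ nuCdf r z := by
  rw [nuCdf_eq_exp_tsum hr0 hr1, exp_le_exp, neg_le, ← tsum_neg]
  calc ∑' j : ℕ, -log (nuFactor r (z + j)) ≤ ∑' j : ℕ, (2:ℝ) ^ (-z) * (1 / 2) ^ j :=
        (summable_log_nuFactor hr0 hr1 z).neg.tsum_le_tsum
          (neg_log_nuFactor_add_natCast_le hr1 z) (summable_geometric_two.mul_left _)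
    _ = 2 * (2:ℝ) ^ (-z) := by rw [tsum_mul_left, tsum_geometric_two, mul_comm]

lemma nuCdf_le_one (hr0 : 0 ≤ r) (hr1 : r ≤ 1) (z : ℝ) : nuCdf r z ≤ 1 := by
  rw [nuCdf_eq_exp_tsum hr0 hr1, exp_le_one_iff]
  exact tsum_nonpos fun j => log_nonpos (nuFactor_pos hr1 _).le (nuFactor_le_one hr0 _)

lemma nuCdf_eq_nuFactor_mul (hr0 : 0 ≤ r) (hr1 : r ≤ 1) (z : ℝ) :
    nuCdf r z = nuFactor r z * nuCdf r (z + 1) := by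
  have hshift :
      (fun j : ℕ => nuFactor r (z + ↑(j + 1))) = fun j : ℕ => nuFactor r (z + 1 + j) := by
    funext j; rw [Nat.cast_succ, add_comm (j:ℝ), add_assoc]
  have htail : Multipliable fun j : ℕ => nuFactor r (z + ↑(j + 1)) :=
    hshift ▸ Real.multipliable_of_summable_log (fun _ => nuFactor_pos hr1 _)
      (summable_log_nuFactor hr0 hr1 (z + 1))
  rw [nuCdf, tprod_eq_zero_mul' (f := fun j : ℕ => nuFactor r (z + j)) htail, hshift,
    Nat.cast_zero, add_zero, nuCdf]

lemma tendsto_nuCdf_atTop (hr0 : 0 ≤ r) (hr1 : r ≤ 1) : Tendsto (nuCdf r) atTop (𝓝 1) := by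
  have h2 : Tendsto (fun z : ℝ => (2:ℝ) ^ (-z)) atTop (𝓝 0) :=
    (tendsto_rpow_atBot_of_base_gt_one 2 one_lt_two).comp tendsto_neg_atTop_atBot
  have lower : Tendsto (fun z : ℝ => exp (-(2 * (2:ℝ) ^ (-z)))) atTop (𝓝 1) := by
    simpa using ((h2.const_mul 2).neg).rexp
  exact tendsto_of_tendsto_of_tendsto_of_le_of_le lower tendsto_const_nhds
    (exp_neg_two_mul_le_nuCdf hr0 hr1) (nuCdf_le_one hr0 hr1)

lemma tendsto_nuCdf_atBot (hr0 : 0 < r) (hr1 : r ≤ 1) : Tendsto (nuCdf r) atBot (𝓝 0) := by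
  have hL := tendsto_atBot_ciInf (monotone_nuCdf hr0.le hr1)
    ⟨0, by rintro _ ⟨z, rfl⟩; exact nuCdf_nonneg hr0.le hr1 z⟩
  have hrec : Tendsto (fun z => nuFactor r z * nuCdf r (z + 1)) atBot
      (𝓝 ((1 - r) * ⨅ z, nuCdf r z)) :=
    (tendsto_nuFactor_atBot r).mul (hL.comp (tendsto_atBot_add_const_right _ 1 tendsto_id))
  have hfix := tendsto_nhds_unique hL
    (hrec.congr fun z => (nuCdf_eq_nuFactor_mul hr0.le hr1 z).symm)
  have : r * ⨅ z, nuCdf r z = 0 := by linarith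
  rwa [(mul_eq_zero.1 this).resolve_left hr0.ne'] at hL

lemma nu_eq_nuCdf_sub (hr0 : 0 ≤ r) (hr1 : r ≤ 1) (z : ℝ) :
    nu z r = nuCdf r (z + 1) - nuCdf r z := by
  have htail : ∏' j : ℕ, (1 - (1 - exp (-(2:ℝ) ^ (-z - ((j : ℝ) + 1)))) * r) = nuCdf r (z + 1) :=
    tprod_congr fun j => by rw [nuFactor]; ring_nf
  rw [nu, htail, nuCdf_eq_nuFactor_mul hr0 hr1 z, nuFactor]
  ring

end

/-- For `0 < r ≤ 1`, `z ↦ ν(z, r)` is a probability density on `ℝ`. -/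
theorem stmt_4 (r : ℝ) (hr0 : 0 < r) (hr1 : r ≤ 1) :
    ∫ z : ℝ, nu z r = 1 := by
  simp_rw [nu_eq_nuCdf_sub hr0.le hr1]
  rw [(monotone_nuCdf hr0.le hr1).integral_sub_comp_add zero_le_one (tendsto_nuCdf_atBot hr0 hr1)
    (tendsto_nuCdf_atTop hr0.le hr1)]
  norm_num
end

section
/- For every t with 0 < t < 1 and every r with 1/2 ≤ r ≤ 1, the function z ↦ 2^{t·z} · ν(z, r) is Lebesgue integrable on ℝ; in particular the quantity φ(t, r) = ∫_{ℝ} 2^{t·z} ν(z, r) dz is finite. -/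
/-!
Every factor of the infinite product in `ν(z, r)` lies in the closed submonoid `[0, 1]` of `ℝ`,
hence so does the product, and `0 ≤ ν(z, r) ≤ 1 - e^{-2^{-z}} ≤ min(1, 2^{-z})`. The integrand is
therefore dominated by `2^{tz}` on `z ≤ 0` and by `2^{(t-1)z}` on `z > 0`, both integrable
because `0 < t < 1`.
-/

open MeasureTheory

open Real Set unitInterval

lemma one_sub_exp_neg_mem_unitInterval {x : ℝ} (hx : 0 ≤ x) : 1 - exp (-x) ∈ I :=
  Icc.mem_iff_one_sub_mem.mp ⟨(exp_pos _).le, exp_le_one_iff.mpr (neg_nonpos.mpr hx)⟩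

lemma one_sub_exp_neg_le_self (x : ℝ) : 1 - exp (-x) ≤ x := by
  linarith [add_one_le_exp (-x)]

lemma integrableOn_rpow_mul_Iic {b a : ℝ} (hb : 1 < b) (ha : 0 < a) (c : ℝ) :
    IntegrableOn (fun x : ℝ => b ^ (a * x)) (Iic c) := by
  simpa only [rpow_def_of_pos (zero_lt_one.trans hb), ← mul_assoc] using
    integrableOn_exp_mul_Iic (mul_pos (log_pos hb) ha) c

lemma integrableOn_rpow_mul_Ioi {b a : ℝ} (hb : 1 < b) (ha : a < 0) (c : ℝ) :
    IntegrableOn (fun x : ℝ => b ^ (a * x)) (Ioi c) := by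
  simpa only [rpow_def_of_pos (zero_lt_one.trans hb), ← mul_assoc] using
    integrableOn_exp_mul_Ioi (mul_neg_of_pos_of_neg (log_pos hb) ha) c

lemma integrable_rpow_mul_mul_of_norm_le {b t : ℝ} (hb : 1 < b) (ht0 : 0 < t) (ht1 : t < 1)
    {g : ℝ → ℝ} (hg : AEStronglyMeasurable g) (hg_one : ∀ x, ‖g x‖ ≤ 1)
    (hg_rpow : ∀ x, ‖g x‖ ≤ b ^ (-x)) :
    Integrable fun x => b ^ (t * x) * g x := by
  have hb0 : 0 < b := zero_lt_one.trans hb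
  have hmeas : AEStronglyMeasurable fun x => b ^ (t * x) * g x :=
    ((continuous_const_rpow hb0.ne').comp (continuous_const_mul t)).aestronglyMeasurable.mul hg
  have hnorm (x : ℝ) : ‖b ^ (t * x) * g x‖ = b ^ (t * x) * ‖g x‖ := by
    rw [norm_mul, norm_of_nonneg (rpow_nonneg hb0.le _)]
  have hIic : IntegrableOn (fun x => b ^ (t * x) * g x) (Iic 0) := by
    refine (integrableOn_rpow_mul_Iic hb ht0 0).mono' hmeas.restrict (ae_of_all _ fun x => ?_)
    rw [hnorm]
    exact mul_le_of_le_one_right (rpow_nonneg hb0.le _) (hg_one x)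
  have hIoi : IntegrableOn (fun x => b ^ (t * x) * g x) (Ioi 0) := by
    refine (integrableOn_rpow_mul_Ioi hb (sub_neg.mpr ht1) 0).mono' hmeas.restrict
      (ae_of_all _ fun x => ?_)
    calc ‖b ^ (t * x) * g x‖ ≤ b ^ (t * x) * b ^ (-x) := by
          rw [hnorm]; exact mul_le_mul_of_nonneg_left (hg_rpow x) (rpow_nonneg hb0.le _)
      _ = b ^ ((t - 1) * x) := by rw [← rpow_add hb0]; ring_nf
  simpa only [Iic_union_Ioi, integrableOn_univ] using hIic.union hIoi

lemma tprod_nu_factor_mem_unitInterval {r : ℝ} (hr : r ∈ I) (z : ℝ) :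
    ∏' j : ℕ, (1 - (1 - exp (-(2:ℝ) ^ (-z - ((j : ℝ) + 1)))) * r) ∈ I :=
  tprod_mem (s := submonoid) isClosed_Icc fun _ => Icc.mem_iff_one_sub_mem.mp
    (mul_mem (one_sub_exp_neg_mem_unitInterval (rpow_nonneg zero_le_two _)) hr)

lemma nu_nonneg {r : ℝ} (hr : r ∈ I) (z : ℝ) : 0 ≤ nu z r :=
  mul_nonneg (mul_mem (one_sub_exp_neg_mem_unitInterval (rpow_nonneg zero_le_two _)) hr).1
    (tprod_nu_factor_mem_unitInterval hr z).1

lemma nu_le_one_sub_exp {r : ℝ} (hr : r ∈ I) (z : ℝ) : nu z r ≤ 1 - exp (-(2:ℝ) ^ (-z)) := by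
  have hA := one_sub_exp_neg_mem_unitInterval (rpow_nonneg zero_le_two (-z))
  calc nu z r ≤ (1 - exp (-(2:ℝ) ^ (-z))) * r :=
        mul_le_of_le_one_right (mul_nonneg hA.1 hr.1) (tprod_nu_factor_mem_unitInterval hr z).2
    _ ≤ 1 - exp (-(2:ℝ) ^ (-z)) := mul_le_of_le_one_right hA.1 hr.2

lemma measurable_nu (r : ℝ) : Measurable fun z => nu z r := by
  unfold nu; fun_prop

/-- For `0 < t < 1` and `1/2 ≤ r ≤ 1`, the function `z ↦ 2^{tz} ν(z, r)` is
Lebesgue integrable on `ℝ`; in particular `φ(t,r) = ∫ 2^{tz} ν(z,r) dz` is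
finite. -/
theorem stmt_5 (t r : ℝ) (ht0 : 0 < t) (ht1 : t < 1)
    (hr0 : 1/2 ≤ r) (hr1 : r ≤ 1) :
    Integrable (fun z : ℝ => (2:ℝ) ^ (t * z) * nu z r) := by
  have hr : r ∈ I := ⟨by linarith, hr1⟩
  have hnorm (z : ℝ) : ‖nu z r‖ = nu z r := norm_of_nonneg (nu_nonneg hr z)
  refine integrable_rpow_mul_mul_of_norm_le one_lt_two ht0 ht1
    (measurable_nu r).aestronglyMeasurable (fun z => ?_) (fun z => ?_)
  · rw [hnorm]
    exact (nu_le_one_sub_exp hr z).trans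
      (one_sub_exp_neg_mem_unitInterval (rpow_nonneg zero_le_two _)).2
  · rw [hnorm]
    exact (nu_le_one_sub_exp hr z).trans (one_sub_exp_neg_le_self _)
end

section
/- Let n be a natural number, x : Fin n → ℤ with x ≠ 0, and ε > 0 a real number. Let S be a finite set of prime numbers with |S| ≥ 10 · log₂(‖x‖_∞) / ε. Then the number of primes p ∈ S for which |{v : x_v ≠ 0 and p divides x_v}| > ε · ‖x‖₀ is at most |S| / 10. (Equivalently, if P is drawn uniformly from S, then ℙ(‖x‖₀ − ‖x‖_{0;𝔽_P} > ε‖x‖₀) ≤ 1/10; moreover ‖x‖₀ ≥ ‖x‖_{0;𝔽_p} for every prime p.) -/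
/-- Theorem 3.1 of the paper (random prime selection, KNW-matching bound).
For `x : Fin n → ℤ` nonzero and a set `S` of at least `10 log₂‖x‖_∞ / ε`
primes, the number of primes `p ∈ S` for which more than an `ε`-fraction of
the nonzero coordinates of `x` are divisible by `p` is at most `|S|/10`;
moreover `‖x‖₀ ≥ ‖x‖_{0;𝔽_p}` for every prime `p`. -/
theorem stmt_9 (n : ℕ) (x : Fin n → ℤ) (hx : x ≠ 0) (ε : ℝ) (hε : 0 < ε)
    (S : Finset ℕ) (hSprime : ∀ p ∈ S, p.Prime)
    (hScard : 10 * Real.logb 2 ((Finset.univ.sup fun v => (x v).natAbs : ℕ) : ℝ) / ε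
      ≤ (S.card : ℝ)) :
    (((S.filter fun (p : ℕ) =>
        ε * ((Finset.univ.filter fun v => x v ≠ 0).card : ℝ) <
          ((Finset.univ.filter fun v => x v ≠ 0 ∧ (p : ℤ) ∣ x v).card : ℝ)).card : ℝ)
      ≤ (S.card : ℝ) / 10) ∧
    (∀ p : ℕ, p.Prime →
      (Finset.univ.filter fun v => ¬ (p : ℤ) ∣ x v).card
        ≤ (Finset.univ.filter fun v => x v ≠ 0).card) := by
  classical
  set M : ℕ := Finset.univ.sup fun v => (x v).natAbs with hMdef
  set supp : Finset (Fin n) := Finset.univ.filter fun v => x v ≠ 0 with hsuppdef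
  obtain ⟨v₀, hv₀⟩ := Function.ne_iff.mp hx
  have hk : 0 < supp.card :=
    Finset.card_pos.mpr ⟨v₀, Finset.mem_filter.mpr ⟨Finset.mem_univ v₀, hv₀⟩⟩
  refine ⟨?_, ?_⟩
  · -- per-coordinate bound on number of prime divisors in S
    have key : ∀ v ∈ supp,
        ((S.filter fun (p : ℕ) => (p : ℤ) ∣ x v).card : ℝ) ≤ Real.logb 2 (M : ℝ) := by
      intro v hv
      have hxv : x v ≠ 0 := (Finset.mem_filter.mp hv).2
      set T := S.filter fun (p : ℕ) => (p : ℤ) ∣ x v with hT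
      have hdvd : (∏ p ∈ T, p) ∣ (x v).natAbs := by
        refine Finset.prod_primes_dvd _ (fun p hp =>
          (hSprime p (Finset.mem_filter.mp hp).1).prime) (fun p hp => ?_)
        exact Int.natAbs_dvd_natAbs.mpr
          (by simpa using (Finset.mem_filter.mp hp).2)
      have hpow : 2 ^ T.card ≤ ∏ p ∈ T, p := by
        calc 2 ^ T.card = ∏ _p ∈ T, 2 := by rw [Finset.prod_const]
        _ ≤ ∏ p ∈ T, p := by
            refine Finset.prod_le_prod' fun p hp => ?_
            exact (hSprime p (Finset.mem_filter.mp hp).1).two_le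
      have hle : 2 ^ T.card ≤ M :=
        le_trans (le_trans hpow
          (Nat.le_of_dvd (Int.natAbs_pos.mpr hxv) hdvd))
          (Finset.le_sup (f := fun v => (x v).natAbs) (Finset.mem_univ v))
      have hleR : (2 : ℝ) ^ T.card ≤ (M : ℝ) := by exact_mod_cast hle
      have hMpos : (0:ℝ) < (M:ℝ) := lt_of_lt_of_le (by positivity) hleR
      have := (Real.logb_le_logb (by norm_num : (1:ℝ) < 2)
        (by positivity : (0:ℝ) < (2:ℝ) ^ T.card) hMpos).mpr hleR
      calc (T.card : ℝ) = Real.logb 2 ((2:ℝ) ^ T.card) := by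
            rw [Real.logb_pow]; simp [Real.logb_self_eq_one]
      _ ≤ Real.logb 2 (M : ℝ) := this
    -- double count
    have count : ∑ p ∈ S, ((supp.filter fun v => (p : ℤ) ∣ x v).card)
        = ∑ v ∈ supp, (S.filter fun (p : ℕ) => (p : ℤ) ∣ x v).card := by
      calc ∑ p ∈ S, ((supp.filter fun v => (p : ℤ) ∣ x v).card)
          = ∑ p ∈ S, ∑ v ∈ supp, if (p : ℤ) ∣ x v then 1 else 0 := by
            refine Finset.sum_congr rfl fun p _ => ?_
            rw [Finset.card_filter]
      _ = ∑ v ∈ supp, ∑ p ∈ S, if (p : ℤ) ∣ x v then 1 else 0 := Finset.sum_comm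
      _ = ∑ v ∈ supp, (S.filter fun (p : ℕ) => (p : ℤ) ∣ x v).card := by
            refine Finset.sum_congr rfl fun v _ => ?_
            rw [Finset.card_filter]
    set B := S.filter fun (p : ℕ) =>
        ε * ((Finset.univ.filter fun v => x v ≠ 0).card : ℝ) <
          ((Finset.univ.filter fun v => x v ≠ 0 ∧ (p : ℤ) ∣ x v).card : ℝ) with hB
    have hfilt : ∀ p : ℕ, (Finset.univ.filter fun v => x v ≠ 0 ∧ (p : ℤ) ∣ x v)
        = supp.filter fun v => (p : ℤ) ∣ x v := by
      intro p
      rw [hsuppdef, Finset.filter_filter]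
    have main : (B.card : ℝ) * (ε * (supp.card : ℝ))
        ≤ (supp.card : ℝ) * Real.logb 2 (M : ℝ) := by
      calc (B.card : ℝ) * (ε * (supp.card : ℝ))
          = ∑ _p ∈ B, ε * (supp.card : ℝ) := by rw [Finset.sum_const, nsmul_eq_mul]
      _ ≤ ∑ p ∈ B, ((supp.filter fun v => (p : ℤ) ∣ x v).card : ℝ) := by
          refine Finset.sum_le_sum fun p hp => ?_
          have := (Finset.mem_filter.mp hp).2
          rw [hfilt p] at this
          exact le_of_lt this
      _ ≤ ∑ p ∈ S, ((supp.filter fun v => (p : ℤ) ∣ x v).card : ℝ) :=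
          Finset.sum_le_sum_of_subset_of_nonneg (Finset.filter_subset _ _)
            (fun p _ _ => by positivity)
      _ = ∑ v ∈ supp, ((S.filter fun (p : ℕ) => (p : ℤ) ∣ x v).card : ℝ) := by
          exact_mod_cast congrArg (Nat.cast : ℕ → ℝ) count
      _ ≤ ∑ _v ∈ supp, Real.logb 2 (M : ℝ) := Finset.sum_le_sum key
      _ = (supp.card : ℝ) * Real.logb 2 (M : ℝ) := by
          rw [Finset.sum_const, nsmul_eq_mul]
    have hkR : (0 : ℝ) < (supp.card : ℝ) := by exact_mod_cast hk
    have h1 : (B.card : ℝ) * ε ≤ Real.logb 2 (M : ℝ) := by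
      have h := main
      rw [← mul_assoc, mul_comm ((supp.card : ℝ)) (Real.logb 2 (M : ℝ))] at h
      exact le_of_mul_le_mul_right h hkR
    have h2 : (B.card : ℝ) ≤ Real.logb 2 (M : ℝ) / ε := (le_div_iff₀ hε).mpr h1
    calc (B.card : ℝ) ≤ Real.logb 2 (M : ℝ) / ε := h2
    _ = 10 * Real.logb 2 (M : ℝ) / ε / 10 := by ring
    _ ≤ (S.card : ℝ) / 10 := by linarith
  · intro p hp
    refine Finset.card_le_card fun v hv => ?_
    simp only [hsuppdef, Finset.mem_filter, Finset.mem_univ, true_and] at hv ⊢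
    intro h
    exact hv (h ▸ dvd_zero _)
end

section
/- Let n be a natural number, x : Fin n → ℤ with x ≠ 0, and ε > 0 a real number. Let S be a nonempty finite set of prime numbers such that every p ∈ S satisfies (p : ℝ) ≥ ‖x‖₁ / ‖x‖₀, and such that |S| ≥ 10 / ε. Then the number of primes p ∈ S for which |{v : x_v ≠ 0 and p divides x_v}| ≥ ε · ‖x‖₀ is at most |S| / 10. (Equivalently, if P is drawn uniformly from S, then ℙ(‖x‖₀ − ‖x‖_{0;𝔽_P} ≥ ε‖x‖₀) ≤ 1/10.) -/
/-!
Write `N = ‖x‖₀`, `L = ‖x‖₁` and `M = L / N`. Distinct primes dividing a nonzero integer `z`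
have product dividing `z`, and a product of numbers `≥ 2` dominates their sum; so at most
`|z| / M` primes of `S` (each `≥ M`) divide `z`. Counting pairs `(p, v)` with `p ∣ x v ≠ 0`
by coordinates therefore gives at most `L / M = N` pairs in total, and by Markov's inequality
at most `N / (ε N) = 1 / ε ≤ |S| / 10` primes of `S` can take part in `ε N` pairs or more.
-/

open Finset

lemma Finset.sum_le_prod_of_two_le {ι : Type*} (s : Finset ι) {f : ι → ℕ}
    (hf : ∀ i ∈ s, 2 ≤ f i) : ∑ i ∈ s, f i ≤ ∏ i ∈ s, f i := by
  classical
  induction s using Finset.induction_on with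
  | empty => simp
  | insert a s ha ih =>
    rw [sum_insert ha, prod_insert ha]
    have hfa : 2 ≤ f a := hf a (mem_insert_self a s)
    have ih := ih fun i hi => hf i (mem_insert_of_mem hi)
    rcases s.eq_empty_or_nonempty with rfl | ⟨b, hb⟩
    · simp
    · have hprod : 2 ≤ ∏ i ∈ s, f i :=
        (hf b (mem_insert_of_mem hb)).trans <| single_le_prod'
          (fun i hi => one_le_two.trans (hf i (mem_insert_of_mem hi))) hb
      calc f a + ∑ i ∈ s, f i ≤ f a + ∏ i ∈ s, f i := by gcongr
        _ ≤ f a * ∏ i ∈ s, f i := add_le_mul hfa hprod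

lemma Nat.sum_le_of_forall_prime_dvd {T : Finset ℕ} {m : ℕ} (hm : m ≠ 0)
    (hT : ∀ p ∈ T, p.Prime ∧ p ∣ m) : ∑ p ∈ T, p ≤ m :=
  (T.sum_le_prod_of_two_le fun p hp => (hT p hp).1.two_le).trans <|
    Nat.le_of_dvd (Nat.pos_of_ne_zero hm) <|
      prod_primes_dvd m (fun p hp => (hT p hp).1.prime) fun p hp => (hT p hp).2

lemma Finset.card_filter_mul_le_sum {ι : Type*} (s : Finset ι) {f : ι → ℝ}
    (hf : ∀ i ∈ s, 0 ≤ f i) (t : ℝ) :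
    (#{i ∈ s | t ≤ f i} : ℝ) * t ≤ ∑ i ∈ s, f i :=
  calc (#{i ∈ s | t ≤ f i} : ℝ) * t ≤ ∑ i ∈ s with t ≤ f i, f i := by
        simpa [nsmul_eq_mul, mul_comm] using card_nsmul_le_sum _ f t fun i hi => (mem_filter.1 hi).2
    _ ≤ ∑ i ∈ s, f i :=
        sum_le_sum_of_subset_of_nonneg (filter_subset _ s) fun i hi _ => hf i hi

lemma card_filter_ne_zero_pos {ι R : Type*} [Fintype ι] [Zero R] [DecidableEq R] {x : ι → R}
    (hx : x ≠ 0) : 0 < #{v | x v ≠ 0} :=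
  let ⟨w, hw⟩ := Function.ne_iff.1 hx
  card_pos.2 ⟨w, mem_filter.2 ⟨mem_univ w, hw⟩⟩

section PrimesDividingCoordinates

variable {S : Finset ℕ} {M : ℝ}

lemma card_filter_dvd_mul_le_abs (hS : ∀ p ∈ S, p.Prime) (hM : ∀ p ∈ S, M ≤ p) {z : ℤ}
    (hz : z ≠ 0) : (#(S.filter fun p : ℕ => (p : ℤ) ∣ z) : ℝ) * M ≤ |(z : ℝ)| := by
  set T := S.filter (fun p : ℕ => (p : ℤ) ∣ z)
  have hsum : ∑ p ∈ T, p ≤ z.natAbs := Nat.sum_le_of_forall_prime_dvd (Int.natAbs_ne_zero.2 hz)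
    fun p hp => ⟨hS p (mem_filter.1 hp).1, Int.natCast_dvd.1 (mem_filter.1 hp).2⟩
  calc (#T : ℝ) * M = ∑ _p ∈ T, M := by rw [sum_const, nsmul_eq_mul]
    _ ≤ ∑ p ∈ T, (p : ℝ) := sum_le_sum fun p hp => hM p (mem_filter.1 hp).1
    _ ≤ (z.natAbs : ℝ) := by rw [← Nat.cast_sum]; exact_mod_cast hsum
    _ = |(z : ℝ)| := by rw [Nat.cast_natAbs, Int.cast_abs]

lemma sum_card_filter_dvd_mul_le_sum_abs {ι : Type*} [Fintype ι] (x : ι → ℤ)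
    (hS : ∀ p ∈ S, p.Prime) (hM : ∀ p ∈ S, M ≤ p) :
    (∑ p ∈ S, (#{v | x v ≠ 0 ∧ (p : ℤ) ∣ x v} : ℝ)) * M ≤ ((∑ v, |x v| : ℤ) : ℝ) := by
  have hswap : ∑ p ∈ S, (#{v | x v ≠ 0 ∧ (p : ℤ) ∣ x v} : ℝ)
      = ∑ v, (#(S.filter fun p : ℕ => x v ≠ 0 ∧ (p : ℤ) ∣ x v) : ℝ) := by
    simp only [card_filter, Nat.cast_sum]
    exact sum_comm
  have hcoord : ∀ v, (#(S.filter fun p : ℕ => x v ≠ 0 ∧ (p : ℤ) ∣ x v) : ℝ) * M ≤ |(x v : ℝ)| := by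
    intro v
    by_cases hv : x v = 0
    · simp [hv]
    · simpa [hv] using card_filter_dvd_mul_le_abs hS hM hv
  calc (∑ p ∈ S, (#{v | x v ≠ 0 ∧ (p : ℤ) ∣ x v} : ℝ)) * M
      = ∑ v, (#(S.filter fun p : ℕ => x v ≠ 0 ∧ (p : ℤ) ∣ x v) : ℝ) * M := by
        rw [hswap, sum_mul]
    _ ≤ ∑ v, |(x v : ℝ)| := sum_le_sum fun v _ => hcoord v
    _ = ((∑ v, |x v| : ℤ) : ℝ) := by push_cast; rfl

lemma sum_card_filter_dvd_le_card_support {ι : Type*} [Fintype ι] {x : ι → ℤ} (hx : x ≠ 0)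
    (hS : ∀ p ∈ S, p.Prime)
    (hM : ∀ p ∈ S, ((∑ v, |x v| : ℤ) : ℝ) / (#{v | x v ≠ 0} : ℝ) ≤ p) :
    ∑ p ∈ S, (#{v | x v ≠ 0 ∧ (p : ℤ) ∣ x v} : ℝ) ≤ #{v | x v ≠ 0} := by
  have hN : (0 : ℝ) < #{v | x v ≠ 0} := by exact_mod_cast card_filter_ne_zero_pos hx
  obtain ⟨w, hw⟩ := Function.ne_iff.1 hx
  have hL : (0 : ℝ) < ((∑ v, |x v| : ℤ) : ℝ) := by
    exact_mod_cast sum_pos' (fun v _ => abs_nonneg (x v)) ⟨w, mem_univ w, abs_pos.2 hw⟩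
  have h := sum_card_filter_dvd_mul_le_sum_abs x hS hM
  rw [← mul_div_assoc, div_le_iff₀ hN] at h
  exact le_of_mul_le_mul_right (by linarith) hL

end PrimesDividingCoordinates

theorem stmt_11_general (n : ℕ) (x : Fin n → ℤ) (hx : x ≠ 0) (ε : ℝ) (hε : 0 < ε)
    (S : Finset ℕ) (hSprime : ∀ p ∈ S, p.Prime)
    (hSmin : ∀ p ∈ S, ((∑ v, |x v| : ℤ) : ℝ) /
      ((Finset.univ.filter fun v => x v ≠ 0).card : ℝ) ≤ (p : ℝ))
    (hScard : 10 / ε ≤ (S.card : ℝ)) :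
    (((S.filter fun (p : ℕ) =>
        ε * ((Finset.univ.filter fun v => x v ≠ 0).card : ℝ) ≤
          ((Finset.univ.filter fun v => x v ≠ 0 ∧ (p : ℤ) ∣ x v).card : ℝ)).card : ℝ)
      ≤ (S.card : ℝ) / 10) := by
  have hN : (0 : ℝ) < #{v | x v ≠ 0} := by exact_mod_cast card_filter_ne_zero_pos hx
  have hmarkov := S.card_filter_mul_le_sum (f := fun p => (#{v | x v ≠ 0 ∧ (p : ℤ) ∣ x v} : ℝ))
    (fun _ _ => Nat.cast_nonneg _) (ε * #{v | x v ≠ 0})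
  have htotal := sum_card_filter_dvd_le_card_support hx hSprime hSmin
  have hbad : (#(S.filter fun p : ℕ =>
      ε * #{v | x v ≠ 0} ≤ #{v | x v ≠ 0 ∧ (p : ℤ) ∣ x v}) : ℝ) * ε ≤ 1 :=
    le_of_mul_le_mul_right (by linarith) hN
  rw [div_le_iff₀ hε] at hScard
  rw [le_div_iff₀ (by norm_num)]
  exact le_of_mul_le_mul_right (by linarith) hε

/-- Theorem 3.2 of the paper (average non-zero frequency prime selection).
If every prime in `S` is at least `‖x‖₁/‖x‖₀` and `|S| ≥ 10/ε`, then the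
number of primes `p ∈ S` dividing at least an `ε`-fraction of the nonzero
coordinates of `x` is at most `|S|/10`. -/
theorem stmt_11 (n : ℕ) (x : Fin n → ℤ) (hx : x ≠ 0) (ε : ℝ) (hε : 0 < ε)
    (S : Finset ℕ) (hSne : S.Nonempty) (hSprime : ∀ p ∈ S, p.Prime)
    (hSmin : ∀ p ∈ S, ((∑ v, |x v| : ℤ) : ℝ) /
      ((Finset.univ.filter fun v => x v ≠ 0).card : ℝ) ≤ (p : ℝ))
    (hScard : 10 / ε ≤ (S.card : ℝ)) :
    (((S.filter fun (p : ℕ) =>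
        ε * ((Finset.univ.filter fun v => x v ≠ 0).card : ℝ) ≤
          ((Finset.univ.filter fun v => x v ≠ 0 ∧ (p : ℤ) ∣ x v).card : ℝ)).card : ℝ)
      ≤ (S.card : ℝ) / 10) :=
  stmt_11_general n x hx ε hε S hSprime hSmin hScard
end

section
/- Let n be a natural number, x : Fin n → ℤ with x ≠ 0, and let S be a finite set of prime numbers. For each p ∈ S let y_p = |{v : x_v ≠ 0 and p divides x_v}|. Then Σ_{p ∈ S} y_p · log p ≤ ‖x‖₀ · log(‖x‖₁ / ‖x‖₀). In particular, if S is nonempty and p_* = min S, then Σ_{p ∈ S} y_p ≤ ‖x‖₀ · log(‖x‖₁/‖x‖₀) / log p_*. -/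
/-!
For each `v` with `x v ≠ 0`, the primes of `S` dividing `x v` have product dividing `x v`, so the
sum of their logarithms is at most `log |x v|`. Counting the pairs `(p, v)` with `p ∣ x v` in
both orders turns the left-hand side into the sum of these per-coordinate sums, and concavity of
`log` (AM–GM) bounds `∑_{x v ≠ 0} log |x v|` by `‖x‖₀ log (‖x‖₁ / ‖x‖₀)`. The second bound follows
from the first since `log p ≥ log p_* > 0` for every `p ∈ S`.
-/

open Finset Real

theorem sum_log_le_log_abs_of_primes_dvd {S : Finset ℕ} {m : ℤ} (hm : m ≠ 0)
    (hprime : ∀ p ∈ S, p.Prime) (hdvd : ∀ p ∈ S, (p : ℤ) ∣ m) :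
    ∑ p ∈ S, log p ≤ log |(m : ℝ)| := by
  have hpos : ∀ p ∈ S, (0 : ℝ) < p := fun p hp => mod_cast (hprime p hp).pos
  have hprod_dvd : ∏ p ∈ S, p ∣ m.natAbs :=
    prod_primes_dvd _ (fun p hp => (hprime p hp).prime)
      (fun p hp => Int.natCast_dvd.mp (hdvd p hp))
  have hprod_le : ∏ p ∈ S, (p : ℝ) ≤ |(m : ℝ)| := by
    rw [← Int.cast_abs, Int.abs_eq_natAbs, Int.cast_natCast, ← Nat.cast_prod]
    exact Nat.cast_le.mpr (Nat.le_of_dvd (Int.natAbs_pos.mpr hm) hprod_dvd)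
  rw [← log_prod fun p hp => (hpos p hp).ne']
  exact log_le_log (prod_pos hpos) hprod_le

theorem Finset.sum_log_le_card_mul_log_sum_div_card {ι : Type*} (T : Finset ι) {a : ι → ℝ}
    (ha : ∀ i ∈ T, 0 < a i) :
    ∑ i ∈ T, log (a i) ≤ #T * log ((∑ i ∈ T, a i) / #T) := by
  rcases T.eq_empty_or_nonempty with rfl | hT
  · simp
  have hcard : (0 : ℝ) < #T := mod_cast hT.card_pos
  have hjensen := strictConcaveOn_log_Ioi.concaveOn.le_map_sum (t := T)
    (w := fun _ => (#T : ℝ)⁻¹) (p := a) (fun _ _ => by positivity)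
    (by rw [sum_const, nsmul_eq_mul, mul_inv_cancel₀ hcard.ne']) ha
  simp only [smul_eq_mul, inv_mul_eq_div, ← sum_div] at hjensen
  rwa [div_le_iff₀' hcard] at hjensen

theorem Finset.sum_card_filter_mul_eq_sum_sum_filter {α β R : Type*} [NonAssocSemiring R]
    (s : Finset α) (t : Finset β) (r : α → β → Prop) [∀ a b, Decidable (r a b)] (f : α → R) :
    ∑ a ∈ s, (#{b ∈ t | r a b} : R) * f a = ∑ b ∈ t, ∑ a ∈ s with r a b, f a := by
  simp_rw [← nsmul_eq_mul, ← sum_const, sum_filter]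
  exact sum_comm

theorem sum_card_dvd_mul_log_le {ι : Type*} [Fintype ι] (x : ι → ℤ) (S : Finset ℕ)
    (hprime : ∀ p ∈ S, p.Prime) :
    ∑ p ∈ S, (#{v | x v ≠ 0 ∧ (p : ℤ) ∣ x v} : ℝ) * log p
      ≤ #{v | x v ≠ 0} * log (((∑ v, |x v| : ℤ) : ℝ) / #{v | x v ≠ 0}) := by
  set T : Finset ι := {v | x v ≠ 0}
  have hsupport : ∑ v ∈ T, |x v| = ∑ v, |x v| :=
    sum_subset (subset_univ T) fun v _ hv => by simp_all [T]
  have hfilter (p : ℕ) :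
      (univ.filter fun v => x v ≠ 0 ∧ (p : ℤ) ∣ x v) = T.filter fun v => (p : ℤ) ∣ x v :=
    (filter_filter _ _ _).symm
  calc ∑ p ∈ S, (#{v | x v ≠ 0 ∧ (p : ℤ) ∣ x v} : ℝ) * log p
      = ∑ v ∈ T, ∑ p ∈ S with ((p : ℕ) : ℤ) ∣ x v, log p := by
        simp only [hfilter]
        exact sum_card_filter_mul_eq_sum_sum_filter S T _ _
    _ ≤ ∑ v ∈ T, log |(x v : ℝ)| := sum_le_sum fun v hv =>
        sum_log_le_log_abs_of_primes_dvd (mem_filter.mp hv).2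
          (fun p hp => hprime p (mem_filter.mp hp).1) (fun p hp => (mem_filter.mp hp).2)
    _ ≤ #T * log ((∑ v ∈ T, |(x v : ℝ)|) / #T) :=
        sum_log_le_card_mul_log_sum_div_card T fun v hv =>
          abs_pos.mpr (Int.cast_ne_zero.mpr (mem_filter.mp hv).2)
    _ = #T * log (((∑ v, |x v| : ℤ) : ℝ) / #T) := by push_cast [← hsupport]; rfl

theorem sum_le_div_log_min'_of_sum_mul_log_le {S : Finset ℕ} (hS : S.Nonempty)
    (hmin : 1 < S.min' hS) {y : ℕ → ℝ} (hy : ∀ p ∈ S, 0 ≤ y p) {B : ℝ}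
    (h : ∑ p ∈ S, y p * log p ≤ B) :
    ∑ p ∈ S, y p ≤ B / log (S.min' hS) := by
  have hlog_min : 0 < log (S.min' hS) := log_pos (mod_cast hmin)
  rw [le_div_iff₀ hlog_min, sum_mul]
  refine le_trans (sum_le_sum fun p hp => ?_) h
  exact mul_le_mul_of_nonneg_left
    (log_le_log (by positivity) (mod_cast S.min'_le p hp)) (hy p hp)

theorem stmt_12_general (n : ℕ) (x : Fin n → ℤ)
    (S : Finset ℕ) (hSprime : ∀ p ∈ S, p.Prime) :
    (∑ p ∈ S, ((Finset.univ.filter fun v => x v ≠ 0 ∧ (p : ℤ) ∣ x v).card : ℝ)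
        * Real.log p
      ≤ ((Finset.univ.filter fun v => x v ≠ 0).card : ℝ) *
        Real.log (((∑ v, |x v| : ℤ) : ℝ) /
          ((Finset.univ.filter fun v => x v ≠ 0).card : ℝ))) ∧
    (∀ hS : S.Nonempty,
      ∑ p ∈ S, ((Finset.univ.filter fun v => x v ≠ 0 ∧ (p : ℤ) ∣ x v).card : ℝ)
        ≤ ((Finset.univ.filter fun v => x v ≠ 0).card : ℝ) *
          Real.log (((∑ v, |x v| : ℤ) : ℝ) /
            ((Finset.univ.filter fun v => x v ≠ 0).card : ℝ)) /
          Real.log (S.min' hS)) := by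
  have hmain := sum_card_dvd_mul_log_le x S hSprime
  exact ⟨hmain, fun hS => sum_le_div_log_min'_of_sum_mul_log_le hS
    (hSprime _ (S.min'_mem hS)).one_lt (fun _ _ => by positivity) hmain⟩

/-- AM–GM intermediate inequality in Theorem 3.2: with
`y_p = |{v : x v ≠ 0 ∧ p ∣ x v}|`, one has
`∑_{p ∈ S} y_p log p ≤ ‖x‖₀ log(‖x‖₁/‖x‖₀)`; in particular, if `S` is
nonempty and `p_* = min S`, then
`∑_{p ∈ S} y_p ≤ ‖x‖₀ log(‖x‖₁/‖x‖₀) / log p_*`. -/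
theorem stmt_12 (n : ℕ) (x : Fin n → ℤ) (hx : x ≠ 0)
    (S : Finset ℕ) (hSprime : ∀ p ∈ S, p.Prime) :
    (∑ p ∈ S, ((Finset.univ.filter fun v => x v ≠ 0 ∧ (p : ℤ) ∣ x v).card : ℝ)
        * Real.log p
      ≤ ((Finset.univ.filter fun v => x v ≠ 0).card : ℝ) *
        Real.log (((∑ v, |x v| : ℤ) : ℝ) /
          ((Finset.univ.filter fun v => x v ≠ 0).card : ℝ))) ∧
    (∀ hS : S.Nonempty,
      ∑ p ∈ S, ((Finset.univ.filter fun v => x v ≠ 0 ∧ (p : ℤ) ∣ x v).card : ℝ)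
        ≤ ((Finset.univ.filter fun v => x v ≠ 0).card : ℝ) *
          Real.log (((∑ v, |x v| : ℤ) : ℝ) /
            ((Finset.univ.filter fun v => x v ≠ 0).card : ℝ)) /
          Real.log (S.min' hS)) :=
  stmt_12_general n x S hSprime
end
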